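/- Suppose 𝒮 is a weakly compatible split system on X, S₁, S₂, S₃ ∈ 𝒮 are pairwise incompatible splits, and x ∈ X. Then there exist distinct i, j ∈ {1,2,3} such that S̄_i(x) ∩ S̄_j(x) = S̄₁(x) ∩ S̄₂(x) ∩ S̄₃(x), and this set is nonempty. -/
import Mathlib


variable {X : Type*}
variable {X : Type*}

/-- `S` is a split of `X`: an unordered pair `{A, Aᶜ}` of nonempty complementary parts. -/
def IsSplit (S : Set (Set X)) : Prop :=
  ∃ A : Set X, A.Nonempty ∧ Aᶜ.Nonempty ∧ S = {A, Aᶜ}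

/-- Two splits are compatible if some part of one and some part of the other cover `X`. -/
def Compatible (S T : Set (Set X)) : Prop :=
  ∃ A ∈ S, ∃ B ∈ T, A ∪ B = Set.univ

/-- `x` and `y` lie in the same part of the split `S`, i.e. `S(x) = S(y)`. -/
def SameSide (S : Set (Set X)) (x y : X) : Prop :=
  ∀ A ∈ S, (x ∈ A ↔ y ∈ A)

/-- A split system is weakly compatible if there are no three splits `S₁, S₂, S₃` and
four elements `x₀, x₁, x₂, x₃` with `S_j(x_i) = S_j(x₀)` iff `i = j`. -/
def WeaklyCompatible (𝒮 : Set (Set (Set X))) : Prop :=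
  ¬ ∃ (S : Fin 3 → Set (Set X)) (x : Fin 4 → X),
      (∀ j, S j ∈ 𝒮) ∧ ∀ i j : Fin 3, (SameSide (S j) (x i.succ) (x 0) ↔ i = j)

/-- A split system is octahedral if it arises from a partition `X = X₁ ∪̇ ... ∪̇ X₆`
as `S_i = X_i ∪ X_{i+1} ∪ X_{i+2} | X_{i+3} ∪ X_{i+4} ∪ X_{i+5}` (`i = 1, 2, 3`,
indices mod 6) together with `S₄ = X₁ ∪ X₃ ∪ X₅ | X₂ ∪ X₄ ∪ X₆`. -/
def IsOctahedral (𝒮 : Set (Set (Set X))) : Prop :=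
  ∃ Y : ℕ → Set X,
    (∀ i < 6, (Y i).Nonempty) ∧
    (∀ i < 6, ∀ j < 6, i ≠ j → Y i ∩ Y j = ∅) ∧
    (⋃ i ∈ Finset.range 6, Y i) = Set.univ ∧
    𝒮 = {T | (∃ i < 3, T = {Y i ∪ Y (i+1) ∪ Y (i+2),
                            Y ((i+3) % 6) ∪ Y ((i+4) % 6) ∪ Y ((i+5) % 6)}) ∨
             T = {Y 0 ∪ Y 2 ∪ Y 4, Y 1 ∪ Y 3 ∪ Y 5}}

/-- if `S₁, S₂, S₃` are pairwise incompatible splits of a weakly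
compatible split system `𝒮` (here `S_i = {A i, (A i)ᶜ}` with `A i = S̄_i(x)`,
the part of `S_i` not containing `x`), then two of the sets `S̄_i(x)` intersect
exactly in the triple intersection `S̄₁(x) ∩ S̄₂(x) ∩ S̄₃(x)`, which is nonempty. -/
theorem stmt6 [Fintype X] (𝒮 : Set (Set (Set X)))
    (hsplits : ∀ S ∈ 𝒮, IsSplit S) (hwc : WeaklyCompatible 𝒮)
    (A : Fin 3 → Set X) (x : X)
    (hmem : ∀ i, ({A i, (A i)ᶜ} : Set (Set X)) ∈ 𝒮)
    (hx : ∀ i, x ∉ A i) (hne : ∀ i, (A i).Nonempty)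
    (hinc : ∀ i j, i ≠ j →
      ¬ Compatible ({A i, (A i)ᶜ} : Set (Set X)) {A j, (A j)ᶜ}) :
    ∃ i j : Fin 3, i ≠ j ∧ A i ∩ A j = A 0 ∩ A 1 ∩ A 2 ∧
      (A 0 ∩ A 1 ∩ A 2).Nonempty := by
  have hAA : ∀ i j : Fin 3, i ≠ j → (A i ∩ A j).Nonempty := by
    intro i j hij
    by_contra h
    rw [Set.not_nonempty_iff_eq_empty] at h
    exact hinc i j hij ⟨(A i)ᶜ, Or.inr rfl, (A j)ᶜ, Or.inr rfl, by
      rw [← Set.compl_inter, h, Set.compl_empty]⟩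
  have key : ¬ ((A 1 ∩ A 2 ∩ (A 0)ᶜ).Nonempty ∧ (A 0 ∩ A 2 ∩ (A 1)ᶜ).Nonempty ∧
      (A 0 ∩ A 1 ∩ (A 2)ᶜ).Nonempty) := by
    rintro ⟨⟨y0, hy0⟩, ⟨y1, hy1⟩, ⟨y2, hy2⟩⟩
    apply hwc
    refine ⟨fun j => {A j, (A j)ᶜ}, ![x, y0, y1, y2], fun j => hmem j, ?_⟩
    have hss : ∀ (j : Fin 3) (y : X),
        SameSide ({A j, (A j)ᶜ} : Set (Set X)) y x ↔ y ∉ A j := by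
      intro j y
      constructor
      · intro h hy
        exact hx j ((h (A j) (Or.inl rfl)).mp hy)
      · rintro h B (rfl | rfl)
        · simp [h, hx j]
        · simp [h, hx j]
    intro i j
    fin_cases i <;> fin_cases j <;>
      simp_all [Fin.succ, hss, Set.mem_diff, Set.mem_inter_iff] <;> tauto
  rcases Set.eq_empty_or_nonempty (A 0 ∩ A 1 ∩ (A 2)ᶜ) with h01 | h01
  · have hsub : A 0 ∩ A 1 ⊆ A 2 := fun y hy => by
      by_contra h
      exact Set.eq_empty_iff_forall_notMem.mp h01 y ⟨hy, h⟩
    have heq : A 0 ∩ A 1 = A 0 ∩ A 1 ∩ A 2 := by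
      apply Set.Subset.antisymm
      · exact fun y hy => ⟨hy, hsub hy⟩
      · exact fun y hy => hy.1
    exact ⟨0, 1, by decide, heq, heq ▸ hAA 0 1 (by decide)⟩
  rcases Set.eq_empty_or_nonempty (A 0 ∩ A 2 ∩ (A 1)ᶜ) with h02 | h02
  · have hsub : A 0 ∩ A 2 ⊆ A 1 := fun y hy => by
      by_contra h
      exact Set.eq_empty_iff_forall_notMem.mp h02 y ⟨hy, h⟩
    have heq : A 0 ∩ A 2 = A 0 ∩ A 1 ∩ A 2 := by
      ext y
      constructor
      · exact fun hy => ⟨⟨hy.1, hsub hy⟩, hy.2⟩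
      · exact fun hy => ⟨hy.1.1, hy.2⟩
    exact ⟨0, 2, by decide, heq, heq ▸ hAA 0 2 (by decide)⟩
  rcases Set.eq_empty_or_nonempty (A 1 ∩ A 2 ∩ (A 0)ᶜ) with h12 | h12
  · have hsub : A 1 ∩ A 2 ⊆ A 0 := fun y hy => by
      by_contra h
      exact Set.eq_empty_iff_forall_notMem.mp h12 y ⟨hy, h⟩
    have heq : A 1 ∩ A 2 = A 0 ∩ A 1 ∩ A 2 := by
      ext y
      constructor
      · exact fun hy => ⟨⟨hsub hy, hy.1⟩, hy.2⟩
      · exact fun hy => ⟨hy.1.2, hy.2⟩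
    exact ⟨1, 2, by decide, heq, heq ▸ hAA 1 2 (by decide)⟩
  exact absurd ⟨h12, h02, h01⟩ key
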